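/- (Convolutional AOL Layers, maximally padded case) Let k, n, c_I, c_O be positive integers, m = n + k − 1, P ∈ ℝ^{k×k×c_I×c_O} a convolution kernel with zero-extension P̃, and J the matrix of the maximally padded convolution defined by J^{(b,a)}_{(i₂,j₂),(i₁,j₁)} = P̃^{(a,b)}_{i₁−i₂+k−1, j₁−j₂+k−1}. For each channel c ∈ {1..c_I} define d_c = ( ∑_{Δi=−(k−1)}^{k−1} ∑_{Δj=−(k−1)}^{k−1} ∑_{a=1}^{c_I} | ∑_{i,j} ∑_{b=1}^{c_O} P̃^{(a,b)}_{i,j} P̃^{(c,b)}_{i+Δi, j+Δj} | )^{−1/2} if the bracketed sum is nonzero and d_c = 0 otherwise, and let D be the diagonal matrix on the column index set {1..c_I}×{1..n}² whose entry at (c, i₁, j₁) is d_c. Then the spectral norm of JD is at most 1; equivalently, the channel-wise rescaled maximally padded convolution x ↦ J(Dx) is 1-Lipschitz with respect to the Euclidean norms, and therefore so is any convolutional layer obtained from it by composing with a center-cropping of the output and adding a bias. -/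

import Mathlib

open Matrix BigOperators

/-- Zero-extension of a `k × k` convolution kernel `P` (with `c_I` input and
`c_O` output channels): `zext P a b p q = P^{(a,b)}_{p,q}` for
`0 ≤ p, q ≤ k − 1`, and `0` otherwise. -/
noncomputable def zext {k cI cO : ℕ} (P : Fin k → Fin k → Fin cI → Fin cO → ℝ)
    (a : Fin cI) (b : Fin cO) (p q : ℤ) : ℝ :=
  if h : 0 ≤ p ∧ p < (k : ℤ) ∧ 0 ≤ q ∧ q < (k : ℤ) then
    P ⟨p.toNat, by omega⟩ ⟨q.toNat, by omega⟩ a b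
  else 0

/-- Jacobian of the maximally padded 2D multi-channel convolution with kernel
`P`. -/
noncomputable def convJacobian (k n cI cO : ℕ)
    (P : Fin k → Fin k → Fin cI → Fin cO → ℝ) :
    Matrix (Fin cO × Fin (n + k - 1) × Fin (n + k - 1)) (Fin cI × Fin n × Fin n) ℝ :=
  fun out inp =>
    zext P inp.1 out.1
      ((inp.2.1 : ℤ) - (out.2.1 : ℤ) + (k : ℤ) - 1)
      ((inp.2.2 : ℤ) - (out.2.2 : ℤ) + (k : ℤ) - 1)

/-!
With `w = D v` we have `‖J D v‖² = wᵀ G w` for the Gram matrix `G = Jᵀ J`, and AM-GM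
(`2 |w_p w_q| ≤ w_p² + w_q²`) bounds this by `∑_p (∑_q |G_qp|) w_p²` since `G` is symmetric.
For the maximally padded convolution, `G` at columns `(a, i')`, `(c, i)` is the cross-correlation
of the filters of channels `a` and `c` at offset `i - i'`, which vanishes unless the offset lies in
`(-k, k)²`; so every absolute column sum of `G` in channel `c` is at most `S c`, and
`S c * d c ^ 2 ≤ 1`. Cropping and adding a bias cannot increase the distance of two outputs.
-/

open Finset

lemma sum_comp_le_of_injective {ι κ M : Type*} [Fintype ι] [AddCommMonoid M] [PartialOrder M]
    [IsOrderedAddMonoid M] {g : ι → κ} (hg : Function.Injective g) {f : κ → M}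
    {t : Finset κ} (hf : ∀ x, 0 ≤ f x) (ht : ∀ x ∉ t, f x = 0) :
    ∑ i, f (g i) ≤ ∑ x ∈ t, f x := by
  classical
  calc ∑ i, f (g i) = ∑ x ∈ univ.image g, f x := (sum_image fun _ _ _ _ h => hg h).symm
    _ ≤ ∑ x ∈ univ.image g ∪ t, f x :=
      sum_le_sum_of_subset_of_nonneg (f := f) subset_union_left fun x _ _ => hf x
    _ = ∑ x ∈ t, f x := (sum_subset subset_union_right fun x _ hx => ht x hx).symm

lemma sum_sq_mulVec_eq_dotProduct_gram {m ι R : Type*} [Fintype m] [Fintype ι] [CommRing R]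
    (M : Matrix m ι R) (w : ι → R) :
    ∑ o, (M *ᵥ w) o ^ 2 = w ⬝ᵥ ((Mᵀ * M) *ᵥ w) := by
  rw [← mulVec_mulVec, dotProduct_comm, mulVec_transpose, ← dotProduct_mulVec]
  simp only [dotProduct, sq]

lemma mul_mul_le_abs_mul_add_sq_div_two (t a b : ℝ) :
    t * (a * b) ≤ |t| * ((a ^ 2 + b ^ 2) / 2) := by
  have hamgm : 2 * |a * b| ≤ a ^ 2 + b ^ 2 := by
    have := two_mul_le_add_sq |a| |b|
    rwa [sq_abs, sq_abs, mul_assoc, ← abs_mul] at this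
  calc t * (a * b) ≤ |t * (a * b)| := le_abs_self _
    _ = |t| * |a * b| := abs_mul _ _
    _ ≤ |t| * ((a ^ 2 + b ^ 2) / 2) := by gcongr; linarith

lemma dotProduct_mulVec_le_of_isSymm {ι : Type*} [Fintype ι] {T : Matrix ι ι ℝ} (hT : T.IsSymm)
    (w : ι → ℝ) : w ⬝ᵥ (T *ᵥ w) ≤ ∑ p, (∑ q, |T q p|) * w p ^ 2 := by
  have hsymm : ∀ p q, T p q = T q p := fun p q => hT.apply q p
  have hswap : ∑ p, ∑ q, |T q p| * w q ^ 2 = ∑ p, ∑ q, |T q p| * w p ^ 2 := by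
    rw [sum_comm]; simp only [hsymm]
  calc w ⬝ᵥ (T *ᵥ w) = ∑ p, ∑ q, T q p * (w p * w q) := by
        simp only [dotProduct, mulVec, mul_sum, hsymm]; congr! 2; ring
    _ ≤ ∑ p, ∑ q, |T q p| * ((w p ^ 2 + w q ^ 2) / 2) :=
        sum_le_sum fun p _ => sum_le_sum fun q _ => mul_mul_le_abs_mul_add_sq_div_two _ _ _
    _ = (∑ p, ∑ q, |T q p| * w p ^ 2 + ∑ p, ∑ q, |T q p| * w q ^ 2) / 2 := by
        simp only [← sum_add_distrib, sum_div]; congr! 2; ring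
    _ = ∑ p, (∑ q, |T q p|) * w p ^ 2 := by
        rw [hswap, sum_congr rfl fun p _ => (sum_mul ..).symm]; ring

theorem sum_sq_mul_diagonal_mulVec_le {m ι : Type*} [Fintype m] [Fintype ι] [DecidableEq ι]
    (M : Matrix m ι ℝ) {d : ι → ℝ} (hd : ∀ p, (∑ q, |(Mᵀ * M) q p|) * d p ^ 2 ≤ 1)
    (v : ι → ℝ) : ∑ o, ((M * diagonal d) *ᵥ v) o ^ 2 ≤ ∑ p, v p ^ 2 := by
  have hDv : diagonal d *ᵥ v = fun p => d p * v p := funext (mulVec_diagonal d v)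
  rw [← mulVec_mulVec, hDv, sum_sq_mulVec_eq_dotProduct_gram]
  calc _ ≤ ∑ p, (∑ q, |(Mᵀ * M) q p|) * (d p * v p) ^ 2 :=
        dotProduct_mulVec_le_of_isSymm (by rw [IsSymm, transpose_mul, transpose_transpose]) _
    _ ≤ ∑ p, v p ^ 2 := by
        gcongr with p
        rw [mul_pow, ← mul_assoc]
        exact mul_le_of_le_one_left (sq_nonneg _) (hd p)

lemma mul_sq_aol_scale_le_one {s : ℝ} (hs : 0 ≤ s) :
    s * (if s ≠ 0 then s ^ (-(1 : ℝ) / 2) else 0) ^ 2 ≤ 1 := by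
  split_ifs with h
  · rw [← Real.rpow_natCast, ← Real.rpow_mul hs, show -(1 : ℝ) / 2 * (2 : ℕ) = -1 by norm_num,
      Real.rpow_neg_one, mul_inv_cancel₀ h]
  · simp

section Convolution

variable {k n cI cO : ℕ} (P : Fin k → Fin k → Fin cI → Fin cO → ℝ)

lemma zext_eq_zero {a : Fin cI} {b : Fin cO} {p q : ℤ}
    (h : ¬(0 ≤ p ∧ p < k ∧ 0 ≤ q ∧ q < k)) : zext P a b p q = 0 :=
  dif_neg h

noncomputable def kernelCorr (a c : Fin cI) (Δi Δj : ℤ) : ℝ :=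
  ∑ i : Fin k, ∑ j : Fin k, ∑ b : Fin cO,
    zext P a b (i : ℤ) (j : ℤ) * zext P c b ((i : ℤ) + Δi) ((j : ℤ) + Δj)

lemma kernelCorr_eq_zero {a c : Fin cI} {Δi Δj : ℤ}
    (h : (Δi, Δj) ∉ Icc (-(k : ℤ) + 1) (k - 1) ×ˢ Icc (-(k : ℤ) + 1) (k - 1)) :
    kernelCorr P a c Δi Δj = 0 := by
  simp only [mem_product, mem_Icc] at h
  refine sum_eq_zero fun i _ => sum_eq_zero fun j _ => sum_eq_zero fun b _ => ?_
  rw [zext_eq_zero P (p := i + Δi) (q := j + Δj) (by omega), mul_zero]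

omit P in
/-- Summing over all output rows `i₂` of the padded convolution only sees the kernel rows
`x - i₂ + k - 1 ∈ [0, k)`, each exactly once. -/
lemma sum_output_eq_sum_kernel {M : Type*} [AddCommMonoid M] {F : ℤ → M}
    (hF : ∀ p, F p ≠ 0 → 0 ≤ p ∧ p < k) (x : Fin n) :
    ∑ i₂ : Fin (n + k - 1), F (x - i₂ + k - 1) = ∑ i : Fin k, F i := by
  symm
  refine sum_of_injOn (fun i => ⟨x + (k - 1 - i), by omega⟩) ?_ (by simp) ?_ ?_
  · intro i _ i' _ h
    simp only [Fin.mk.injEq] at h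
    omega
  · intro i₂ _ hi₂
    by_contra hne
    obtain ⟨h0, hk⟩ := hF _ hne
    refine hi₂ ⟨⟨(x - i₂ + k - 1 : ℤ).toNat, by omega⟩, by simp, ?_⟩
    ext; simp only; omega
  · intro i _
    congr 1
    push_cast
    omega

lemma convJacobian_gram_apply (a c : Fin cI) (i₁' j₁' i₁ j₁ : Fin n) :
    ((convJacobian k n cI cO P)ᵀ * convJacobian k n cI cO P) (a, i₁', j₁') (c, i₁, j₁) =
      kernelCorr P a c (i₁ - i₁') (j₁ - j₁') := by
  set F : Fin cO → ℤ → ℤ → ℝ := fun b p q =>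
    zext P a b p q * zext P c b (p + (i₁ - i₁')) (q + (j₁ - j₁'))
  have hF : ∀ b p q, F b p q ≠ 0 → (0 ≤ p ∧ p < k) ∧ 0 ≤ q ∧ q < k := by
    intro b p q h
    by_contra hpq
    exact h (by simp only [F]; rw [zext_eq_zero P (by tauto), zero_mul])
  calc _ = ∑ b, ∑ i₂ : Fin (n + k - 1), ∑ j₂ : Fin (n + k - 1),
        F b (i₁' - i₂ + k - 1) (j₁' - j₂ + k - 1) := by
        simp only [mul_apply, transpose_apply, Fintype.sum_prod_type, convJacobian, F]
        congr! 5 <;> ring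
    _ = ∑ b, ∑ i : Fin k, ∑ j : Fin k, F b i j := by
        refine sum_congr rfl fun b _ => ?_
        have hrow : ∀ p, ∑ j₂ : Fin (n + k - 1), F b p (j₁' - j₂ + k - 1) = ∑ j : Fin k, F b p j :=
          fun p => sum_output_eq_sum_kernel (fun q h => (hF b p q h).2) j₁'
        simp_rw [hrow]
        refine sum_output_eq_sum_kernel (F := fun p => ∑ j : Fin k, F b p j) (fun p h => ?_) i₁'
        obtain ⟨j, -, hj⟩ := exists_ne_zero_of_sum_ne_zero h
        exact (hF b p j hj).1
    _ = kernelCorr P a c (i₁ - i₁') (j₁ - j₁') := by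
        rw [kernelCorr, sum_comm]
        exact sum_congr rfl fun i _ => sum_comm

lemma convJacobian_gram_colSum_le (c : Fin cI) (i₁ j₁ : Fin n) :
    ∑ q, |((convJacobian k n cI cO P)ᵀ * convJacobian k n cI cO P) q (c, i₁, j₁)| ≤
      ∑ Δi ∈ Icc (-(k : ℤ) + 1) (k - 1), ∑ Δj ∈ Icc (-(k : ℤ) + 1) (k - 1),
        ∑ a, |kernelCorr P a c Δi Δj| := by
  have hoffset : Function.Injective fun q : Fin n × Fin n => ((i₁ : ℤ) - q.1, (j₁ : ℤ) - q.2) := by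
    intro q q' h
    simp only [Prod.mk.injEq] at h
    ext <;> omega
  calc _ = ∑ a, ∑ q : Fin n × Fin n, |kernelCorr P a c (i₁ - q.1) (j₁ - q.2)| := by
        simp only [Fintype.sum_prod_type, convJacobian_gram_apply]
    _ ≤ ∑ a, ∑ Δ ∈ Icc (-(k : ℤ) + 1) (k - 1) ×ˢ Icc (-(k : ℤ) + 1) (k - 1),
          |kernelCorr P a c Δ.1 Δ.2| :=
        sum_le_sum fun a _ => sum_comp_le_of_injective hoffset
          (f := fun Δ => |kernelCorr P a c Δ.1 Δ.2|) (fun _ => abs_nonneg _)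
          fun Δ h => by rw [kernelCorr_eq_zero P h, abs_zero]
    _ = _ := by
        rw [sum_comm, sum_product]

end Convolution

theorem aol_convolutional_layer_one_lipschitz_general {k n cI cO : ℕ}
    (P : Fin k → Fin k → Fin cI → Fin cO → ℝ)
    (J : Matrix (Fin cO × Fin (n + k - 1) × Fin (n + k - 1)) (Fin cI × Fin n × Fin n) ℝ)
    (hJ : J = convJacobian k n cI cO P)
    (S : Fin cI → ℝ)
    (hS : ∀ c, S c =
      ∑ Δi ∈ Finset.Icc (-(k : ℤ) + 1) ((k : ℤ) - 1),
        ∑ Δj ∈ Finset.Icc (-(k : ℤ) + 1) ((k : ℤ) - 1),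
          ∑ a : Fin cI,
            |∑ i : Fin k, ∑ j : Fin k, ∑ b : Fin cO,
              zext P a b (i : ℤ) (j : ℤ) * zext P c b ((i : ℤ) + Δi) ((j : ℤ) + Δj)|)
    (d : Fin cI → ℝ)
    (hd : ∀ c, d c = if S c ≠ 0 then (S c) ^ (-(1 : ℝ) / 2) else 0)
    (D : Matrix (Fin cI × Fin n × Fin n) (Fin cI × Fin n × Fin n) ℝ)
    (hD : D = Matrix.diagonal (fun p => d p.1)) :
    (∀ v : Fin cI × Fin n × Fin n → ℝ,
      Real.sqrt (∑ o, ((J * D).mulVec v o) ^ 2) ≤ Real.sqrt (∑ p, (v p) ^ 2)) ∧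
    (∀ (β : Type) [Fintype β]
        (ρ : β → Fin cO × Fin (n + k - 1) × Fin (n + k - 1)),
      Function.Injective ρ →
      ∀ (b : Fin cO × Fin (n + k - 1) × Fin (n + k - 1) → ℝ)
        (x y : Fin cI × Fin n × Fin n → ℝ),
        Real.sqrt (∑ o : β,
            ((J.mulVec (D.mulVec x) + b) (ρ o) - (J.mulVec (D.mulVec y) + b) (ρ o)) ^ 2)
          ≤ Real.sqrt (∑ p, (x p - y p) ^ 2)) := by
  have hscale : ∀ p, (∑ q, |(Jᵀ * J) q p|) * d p.1 ^ 2 ≤ 1 := by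
    rintro ⟨c, i₁, j₁⟩
    have hS_nonneg : 0 ≤ S c := by rw [hS c]; positivity
    calc _ ≤ S c * d c ^ 2 := by
          gcongr
          rw [hJ, hS c]
          exact convJacobian_gram_colSum_le P c i₁ j₁
      _ ≤ 1 := hd c ▸ mul_sq_aol_scale_le_one hS_nonneg
  have hJD : ∀ v, ∑ o, ((J * D) *ᵥ v) o ^ 2 ≤ ∑ p, v p ^ 2 :=
    hD ▸ sum_sq_mul_diagonal_mulVec_le J hscale
  refine ⟨fun v => Real.sqrt_le_sqrt (hJD v), fun β _ ρ hρ b x y => Real.sqrt_le_sqrt ?_⟩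
  have hdiff : ∀ o, (J *ᵥ (D *ᵥ x) + b) o - (J *ᵥ (D *ᵥ y) + b) o = ((J * D) *ᵥ (x - y)) o := by
    intro o
    simp only [mulVec_sub, mulVec_mulVec, Pi.add_apply, Pi.sub_apply]
    ring
  simp only [hdiff]
  calc _ ≤ ∑ o, ((J * D) *ᵥ (x - y)) o ^ 2 :=
        sum_comp_le_of_injective hρ (fun _ => sq_nonneg _) (by simp)
    _ ≤ _ := hJD (x - y)

/-- **Convolutional AOL layers (maximally padded case).** With the
channel-wise AOL rescaling factors `d c = (S c)^(-1/2)` (and `0` if `S c = 0`)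
and the diagonal matrix `D` whose entry at column index `(c, i₁, j₁)` is `d c`,
the spectral norm of `J * D` is at most `1`: the rescaled maximally padded
convolution `x ↦ J (D x)` is `1`-Lipschitz in the Euclidean norms, and so is
any convolutional layer obtained from it by composing with a (center-)cropping
of the output coordinates and adding a bias. -/
theorem aol_convolutional_layer_one_lipschitz {k n cI cO : ℕ}
    (hk : 0 < k) (hn : 0 < n) (hcI : 0 < cI) (hcO : 0 < cO)
    (P : Fin k → Fin k → Fin cI → Fin cO → ℝ)
    (J : Matrix (Fin cO × Fin (n + k - 1) × Fin (n + k - 1)) (Fin cI × Fin n × Fin n) ℝ)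
    (hJ : J = convJacobian k n cI cO P)
    (S : Fin cI → ℝ)
    (hS : ∀ c, S c =
      ∑ Δi ∈ Finset.Icc (-(k : ℤ) + 1) ((k : ℤ) - 1),
        ∑ Δj ∈ Finset.Icc (-(k : ℤ) + 1) ((k : ℤ) - 1),
          ∑ a : Fin cI,
            |∑ i : Fin k, ∑ j : Fin k, ∑ b : Fin cO,
              zext P a b (i : ℤ) (j : ℤ) * zext P c b ((i : ℤ) + Δi) ((j : ℤ) + Δj)|)
    (d : Fin cI → ℝ)
    (hd : ∀ c, d c = if S c ≠ 0 then (S c) ^ (-(1 : ℝ) / 2) else 0)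
    (D : Matrix (Fin cI × Fin n × Fin n) (Fin cI × Fin n × Fin n) ℝ)
    (hD : D = Matrix.diagonal (fun p => d p.1)) :
    (∀ v : Fin cI × Fin n × Fin n → ℝ,
      Real.sqrt (∑ o, ((J * D).mulVec v o) ^ 2) ≤ Real.sqrt (∑ p, (v p) ^ 2)) ∧
    (∀ (β : Type) [Fintype β]
        (ρ : β → Fin cO × Fin (n + k - 1) × Fin (n + k - 1)),
      Function.Injective ρ →
      ∀ (b : Fin cO × Fin (n + k - 1) × Fin (n + k - 1) → ℝ)
        (x y : Fin cI × Fin n × Fin n → ℝ),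
        Real.sqrt (∑ o : β,
            ((J.mulVec (D.mulVec x) + b) (ρ o) - (J.mulVec (D.mulVec y) + b) (ρ o)) ^ 2)
          ≤ Real.sqrt (∑ p, (x p - y p) ^ 2)) :=
  aol_convolutional_layer_one_lipschitz_general P J hJ S hS d hd D hD
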